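/- arXiv:0804.0631 — 3 statements merged into one kernel-verified Lean document; each statement's English description precedes it below -/
import Mathlib

section
/- Let N ≥ 1 and suppose φ_1, …, φ_N : ℤ × ℝ × ℝ → ℝ are twice continuously differentiable in (x,s) and satisfy, for all n ∈ ℤ, x, s ∈ ℝ and 1 ≤ i ≤ N: ∂φ_i(n,x,s)/∂x = φ_i(n+1,x,s) and ∂φ_i(n,x,s)/∂s = −φ_i(n−1,x,s). Then the Casorati determinant τ_n(x,s) = det( (φ_i(n+j−1,x,s))_{1≤i,j≤N} ) solves the bilinear 2D Toda lattice equation: ∂²τ_n/∂s∂x · τ_n − (∂τ_n/∂s)(∂τ_n/∂x) = τ_{n+1} τ_{n−1} − τ_n² for all n, x, s. -/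
/-- A function `τ`, written `τ n x s`, solves the bilinear 2D Toda lattice equation if
`∂²τ_n/∂s∂x · τ_n − (∂τ_n/∂s)(∂τ_n/∂x) = τ_{n+1} τ_{n−1} − τ_n²` for all `n, x, s`. -/
def SolvesBilinearToda (τ : ℤ → ℝ → ℝ → ℝ) : Prop :=
  ∀ (n : ℤ) (x s : ℝ),
    deriv (fun s' => deriv (fun x' => τ n x' s') x) s * τ n x s -
        deriv (fun s' => τ n x s') s * deriv (fun x' => τ n x' s) x =
      τ (n + 1) x s * τ (n - 1) x s - (τ n x s) ^ 2

/-- The Casorati determinant `τ_n(x,s) = det( (φ_i(n+j−1,x,s))_{1≤i,j≤N} )`. -/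
def casorati {N : ℕ} (φ : Fin N → ℤ → ℝ → ℝ → ℝ) : ℤ → ℝ → ℝ → ℝ :=
  fun n x s => Matrix.det (Matrix.of fun i j : Fin N => φ i (n + (j.1 : ℤ)) x s)

/-!
Write `|c₁, …, c_N|` for the determinant whose `j`-th column is `(φ_i(c_j))_i`, so that
`τ_n = |n, …, n+N-1|`. Because `∂ₓ` and `∂ₛ` shift indices by `±1`, they act on such a
determinant column by column, and every term except those coming from the first or last column
repeats a column and vanishes. Hence `τ`, `∂ₓτ`, `∂ₛτ` and `∂ₛ∂ₓτ + τ` all share the middle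
`N - 2` columns and differ only in the indices of the first and last ones, while `τ_{n±1}` are
cyclic rotations of such determinants. The bilinear equation is then the three-term Plücker
relation between determinants with `N - 2` common columns, which follows from Cramer's rule.
-/

open Matrix Function

namespace Matrix

theorem hasDerivAt_det {𝕜 : Type*} [NontriviallyNormedField 𝕜] {n : Type*} [Fintype n]
    [DecidableEq n] {A : 𝕜 → Matrix n n 𝕜} {A' : Matrix n n 𝕜} {t : 𝕜}
    (h : ∀ i j, HasDerivAt (fun u => A u i j) (A' i j) t) :
    HasDerivAt (fun u => (A u).det) (∑ j, ((A t).updateCol j fun i => A' i j).det) t := by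
  let detCLM : ContinuousMultilinearMap 𝕜 (fun _ : n => n → 𝕜) 𝕜 :=
    { toMultilinearMap := detRowAlternating.toMultilinearMap
      cont := continuous_id.matrix_det }
  have hcols : HasDerivAt (fun u => fun j i => A u i j) (fun j i => A' i j) t :=
    hasDerivAt_pi.2 fun j => hasDerivAt_pi.2 fun i => h i j
  have key := (detCLM.hasFDerivAt (fun j i => A t i j)).comp_hasDerivAt t hcols
  have hfun : (detCLM ∘ fun u j i => A u i j) = fun u => (A u).det :=
    funext fun u => det_transpose (A u)
  have hderiv : detCLM.linearDeriv (fun j i => A t i j) (fun j i => A' i j) =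
      ∑ j, ((A t).updateCol j fun i => A' i j).det := by
    refine (ContinuousMultilinearMap.linearDeriv_apply ..).trans
      (Finset.sum_congr rfl fun j _ => ?_)
    rw [← det_transpose, ← updateRow_transpose]
    rfl
  rwa [hfun, hderiv] at key

variable {R : Type*} [CommRing R] {n : Type*} [Fintype n] [DecidableEq n]

theorem det_smul_eq_sum_det_updateCol_smul (A : Matrix n n R) (b : n → R) :
    A.det • b = ∑ j, (A.updateCol j b).det • fun i => A i j := by
  rw [← mulVec_cramer]
  ext i
  simp [mulVec, dotProduct, cramer_apply, mul_comm]

theorem det_updateCol_updateCol_pluecker (M : Matrix n n R) {i j : n} (hij : i ≠ j)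
    (a b c d : n → R) :
    ((M.updateCol i a).updateCol j c).det * ((M.updateCol i b).updateCol j d).det =
      ((M.updateCol i b).updateCol j c).det * ((M.updateCol i a).updateCol j d).det +
        ((M.updateCol i a).updateCol j b).det * ((M.updateCol i c).updateCol j d).det := by
  -- Expand `b` in the columns of `A` by Cramer's rule and apply a determinant that is linear in
  -- its `i`-th column and contains every other column of `A` except the `j`-th: the shared
  -- columns drop out.
  set A := (M.updateCol i a).updateCol j c
  let ψ : (n → R) →ₗ[R] R :=
    { toFun := fun u => ((M.updateCol j d).updateCol i u).det
      map_add' := det_updateCol_add _ i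
      map_smul' := det_updateCol_smul _ i }
  have expand := congrArg ψ (det_smul_eq_sum_det_updateCol_smul A b)
  simp only [map_smul, map_sum, smul_eq_mul] at expand
  rw [Fintype.sum_eq_add i j hij] at expand
  · simpa [ψ, A, updateCol_comm _ hij, updateCol_ne hij, updateCol_ne hij.symm] using expand
  · rintro k ⟨hki, hkj⟩
    refine mul_eq_zero_of_right _ ?_
    simpa [ψ, A, updateCol_ne hki, updateCol_ne hkj] using
      det_updateCol_eq_zero (M := M.updateCol j d) hki
end Matrix

def casoratiMatrix {R ι : Type*} (v : ℤ → ι → R) (c : ι → ℤ) : Matrix ι ι R :=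
  Matrix.of fun i j => v (c j) i

theorem casoratiMatrix_update {R ι : Type*} [DecidableEq ι] (v : ℤ → ι → R) (c : ι → ℤ) (j : ι)
    (k : ℤ) :
    casoratiMatrix v (update c j k) = (casoratiMatrix v c).updateCol j (v k) := by
  ext i j'
  by_cases h : j' = j
  · subst h; simp [casoratiMatrix]
  · simp [casoratiMatrix, h]

section
variable {R : Type*} [CommRing R] {ι : Type*} [Fintype ι] [DecidableEq ι]

theorem det_casoratiMatrix_update_eq_zero (v : ℤ → ι → R) (c : ι → ℤ) {j j' : ι} (h : j' ≠ j) :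
    (casoratiMatrix v (update c j (c j'))).det = 0 :=
  det_zero_of_column_eq h fun i => by simp [casoratiMatrix, h]

theorem det_casoratiMatrix_comp_finRotate {m : ℕ} (v : ℤ → Fin (m + 1) → R)
    (c : Fin (m + 1) → ℤ) :
    (casoratiMatrix v (c ∘ finRotate (m + 1))).det = (-1) ^ m * (casoratiMatrix v c).det := by
  rw [show casoratiMatrix v (c ∘ finRotate (m + 1)) =
      (casoratiMatrix v c).submatrix id (finRotate (m + 1)) from rfl, det_permute', sign_finRotate]
  simp
end

section
variable {𝕜 : Type*} [NontriviallyNormedField 𝕜] {ι : Type*} [Fintype ι] [DecidableEq ι]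

theorem hasDerivAt_det_casoratiMatrix {v : 𝕜 → ℤ → ι → 𝕜} {t ε : 𝕜} {σ : ℤ → ℤ}
    (h : ∀ k i, HasDerivAt (fun u => v u k i) (ε * v t (σ k) i) t) (c : ι → ℤ) :
    HasDerivAt (fun u => (casoratiMatrix (v u) c).det)
      (ε * ∑ j, (casoratiMatrix (v t) (update c j (σ (c j)))).det) t := by
  have key := hasDerivAt_det (A := fun u => casoratiMatrix (v u) c)
    (A' := of fun i j => ε * v t (σ (c j)) i) fun i j => h (c j) i
  rw [Finset.mul_sum]
  refine key.congr_deriv (Finset.sum_congr rfl fun j _ => ?_)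
  rw [casoratiMatrix_update, ← det_updateCol_smul]
  rfl
end

section
variable {R : Type*} [CommRing R] {m : ℕ}

theorem sum_det_casoratiMatrix_update_add_one (v : ℤ → Fin (m + 1) → R) {c : Fin (m + 1) → ℤ}
    (hc : ∀ k : Fin m, c k.succ = c k.castSucc + 1) :
    ∑ j, (casoratiMatrix v (update c j (c j + 1))).det =
      (casoratiMatrix v (update c (Fin.last m) (c (Fin.last m) + 1))).det := by
  rw [Fin.sum_univ_castSucc, Finset.sum_eq_zero fun k _ => ?_, zero_add]
  rw [← hc]
  exact det_casoratiMatrix_update_eq_zero v c (Fin.castSucc_lt_succ (i := k)).ne'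

theorem sum_det_casoratiMatrix_update_sub_one (v : ℤ → Fin (m + 1) → R) {c : Fin (m + 1) → ℤ}
    (hc : ∀ k : Fin m, c k.succ = c k.castSucc + 1) :
    ∑ j, (casoratiMatrix v (update c j (c j - 1))).det =
      (casoratiMatrix v (update c 0 (c 0 - 1))).det := by
  rw [Fin.sum_univ_succ, Finset.sum_eq_zero fun k _ => ?_, add_zero]
  rw [hc, add_sub_cancel_right]
  exact det_casoratiMatrix_update_eq_zero v c (Fin.castSucc_lt_succ (i := k)).ne

theorem sum_det_casoratiMatrix_update_sub_one_eq_first_add_last (v : ℤ → Fin (m + 2) → R)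
    {c : Fin (m + 2) → ℤ} (hc : ∀ k : Fin m, c k.castSucc.succ = c k.castSucc.castSucc + 1) :
    ∑ j, (casoratiMatrix v (update c j (c j - 1))).det =
      (casoratiMatrix v (update c 0 (c 0 - 1))).det +
        (casoratiMatrix v (update c (Fin.last _) (c (Fin.last _) - 1))).det := by
  rw [Fin.sum_univ_succ, Fin.sum_univ_castSucc, Finset.sum_eq_zero fun k _ => ?_, zero_add,
    Fin.succ_last]
  rw [hc, add_sub_cancel_right]
  exact det_casoratiMatrix_update_eq_zero v c Fin.castSucc_lt_succ.ne

theorem det_casoratiMatrix_toda_identity (v : ℤ → Fin (m + 2) → R) {c : Fin (m + 2) → ℤ}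
    (hc : ∀ k : Fin (m + 1), c k.succ = c k.castSucc + 1) :
    (casoratiMatrix v (update c (Fin.last _) (c (Fin.last _) + 1))).det *
        (casoratiMatrix v (update c 0 (c 0 - 1))).det =
      (casoratiMatrix v (update (update c (Fin.last _) (c (Fin.last _) + 1)) 0 (c 0 - 1))).det *
          (casoratiMatrix v c).det +
        (casoratiMatrix v fun j => c j + 1).det * (casoratiMatrix v fun j => c j - 1).det := by
  have h0l : (0 : Fin (m + 2)) ≠ Fin.last _ := Fin.last_pos.ne
  have hpl := det_updateCol_updateCol_pluecker (casoratiMatrix v c) h0l (v (c 0)) (v (c 0 - 1))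
    (v (c (Fin.last _) + 1)) (v (c (Fin.last _)))
  simp only [← casoratiMatrix_update, update_comm h0l, update_eq_self] at hpl
  have hrot_pred : update c (Fin.last _) (c 0 - 1) = (fun j => c j - 1) ∘ finRotate (m + 2) := by
    ext j
    induction j using Fin.lastCases with
    | last => simp
    | cast k => simp [hc, (Fin.castSucc_lt_last k).ne]
  have hrot_succ : (fun j => c j + 1) = update c 0 (c (Fin.last _) + 1) ∘ finRotate (m + 2) := by
    ext j
    induction j using Fin.lastCases with
    | last => simp
    | cast k => simp [hc]
  rw [hrot_pred, det_casoratiMatrix_comp_finRotate] at hpl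
  rw [hrot_succ, det_casoratiMatrix_comp_finRotate]
  linear_combination hpl
end

theorem solvesBilinearToda_casorati_of_hasDerivAt {m : ℕ} (φ : Fin (m + 2) → ℤ → ℝ → ℝ → ℝ)
    (hx : ∀ i k x s, HasDerivAt (fun x' => φ i k x' s) (φ i (k + 1) x s) x)
    (hs : ∀ i k x s, HasDerivAt (fun s' => φ i k x s') (-φ i (k - 1) x s) s) :
    SolvesBilinearToda (casorati φ) := by
  intro n x s
  set D : ℝ → ℝ → (Fin (m + 2) → ℤ) → ℝ :=
    fun x s c => (casoratiMatrix (fun k i => φ i k x s) c).det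
  set c : Fin (m + 2) → ℤ := fun j => n + (j : ℤ)
  set cX := update c (Fin.last _) (c (Fin.last _) + 1)
  have hc : ∀ k : Fin (m + 1), c k.succ = c k.castSucc + 1 := fun k => by simp [c]; ring
  have hcX : ∀ k : Fin m, cX k.castSucc.succ = cX k.castSucc.castSucc + 1 := fun k => by
    simp [cX, c]; ring
  have hφx : ∀ s' k i, HasDerivAt (fun u => φ i k u s') (1 * φ i (k + 1) x s') x :=
    fun s' k i => by simpa using hx i k x s'
  have hφs : ∀ k i, HasDerivAt (fun u => φ i k x u) (-1 * φ i (k - 1) x s) s :=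
    fun k i => by simpa using hs i k x s
  have hτx : ∀ s', HasDerivAt (fun x' => casorati φ n x' s') (D x s' cX) x := fun s' => by
    have := hasDerivAt_det_casoratiMatrix (hφx s') c
    rwa [one_mul, sum_det_casoratiMatrix_update_add_one _ hc] at this
  have hτs : HasDerivAt (fun s' => casorati φ n x s') (-D x s (update c 0 (c 0 - 1))) s := by
    have := hasDerivAt_det_casoratiMatrix hφs c
    rwa [sum_det_casoratiMatrix_update_sub_one _ hc, neg_one_mul] at this
  have hτxs : HasDerivAt (fun s' => deriv (fun x' => casorati φ n x' s') x)
      (-(D x s (update cX 0 (c 0 - 1)) + D x s c)) s := by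
    rw [funext fun s' => (hτx s').deriv]
    have := hasDerivAt_det_casoratiMatrix hφs cX
    rw [sum_det_casoratiMatrix_update_sub_one_eq_first_add_last _ hcX, neg_one_mul] at this
    simpa only [cX, update_of_ne Fin.last_pos.ne, update_self, add_sub_cancel_right, update_idem,
      update_eq_self] using this
  have hτ_succ : casorati φ (n + 1) x s = D x s fun j => c j + 1 := by
    simp only [casorati, D, casoratiMatrix, c, add_right_comm]
  have hτ_pred : casorati φ (n - 1) x s = D x s fun j => c j - 1 := by
    simp only [casorati, D, casoratiMatrix, c, sub_add_eq_add_sub]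
  have hτ : casorati φ n x s = D x s c := rfl
  rw [hτxs.deriv, hτs.deriv, (hτx s).deriv, hτ_succ, hτ_pred, hτ]
  linear_combination det_casoratiMatrix_toda_identity (fun k i => φ i k x s) hc

theorem casoratian_solves_bilinear_toda_standard_general
    (N : ℕ)
    (φ : Fin N → ℤ → ℝ → ℝ → ℝ)
    (hreg : ∀ i n, ContDiff ℝ 2 (fun p : ℝ × ℝ => φ i n p.1 p.2))
    (hx : ∀ i n (x s : ℝ), deriv (fun x' => φ i n x' s) x = φ i (n + 1) x s)
    (hs : ∀ i n (x s : ℝ), deriv (fun s' => φ i n x s') s = -φ i (n - 1) x s) :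
    SolvesBilinearToda (casorati φ) := by
  rcases N with _ | _ | m
  · intro n x s
    simp [casorati]
  · have hτ : ∀ k x s, casorati φ k x s = φ 0 k x s := fun k x s => by simp [casorati]
    intro n x s
    simp only [hτ, hx, hs, add_sub_cancel_right]
    ring
  · have hdiff : ∀ i k, Differentiable ℝ fun p : ℝ × ℝ => φ i k p.1 p.2 :=
      fun i k => (hreg i k).differentiable two_ne_zero
    refine solvesBilinearToda_casorati_of_hasDerivAt φ (fun i k x s => ?_) (fun i k x s => ?_)
    · rw [← hx]
      exact ((hdiff i k).comp (differentiable_id.prodMk (differentiable_const s))).differentiableAt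
        |>.hasDerivAt
    · rw [← hs]
      exact ((hdiff i k).comp ((differentiable_const x).prodMk differentiable_id)).differentiableAt
        |>.hasDerivAt

/-- the Casoratian formulation of the 2D Toda lattice equation with the
standard linear conditions `∂φ_i/∂x = φ_i(n+1)`, `∂φ_i/∂s = −φ_i(n−1)`. -/
theorem casoratian_solves_bilinear_toda_standard
    (N : ℕ) (hN : 1 ≤ N)
    (φ : Fin N → ℤ → ℝ → ℝ → ℝ)
    (hreg : ∀ i n, ContDiff ℝ 2 (fun p : ℝ × ℝ => φ i n p.1 p.2))
    (hx : ∀ i n (x s : ℝ), deriv (fun x' => φ i n x' s) x = φ i (n + 1) x s)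
    (hs : ∀ i n (x s : ℝ), deriv (fun s' => φ i n x s') s = -φ i (n - 1) x s) :
    SolvesBilinearToda (casorati φ) :=
  casoratian_solves_bilinear_toda_standard_general N φ hreg hx hs
end

section
/- Let ε ∈ {1, −1} and N ≥ 1. Suppose φ_1, …, φ_N : ℤ × ℝ × ℝ → ℝ are differentiable in s, μ_{ij} : ℝ → ℝ (1 ≤ i,j ≤ N) are functions, and for all n ∈ ℤ, x, s ∈ ℝ and 1 ≤ i ≤ N: ∂φ_i(n,x,s)/∂s = −ε φ_i(n−1,x,s) + Σ_{j=1}^N μ_{ij}(s) φ_j(n,x,s). Then for the generalized Casorati determinants |i_1,…,i_N| built from φ_1,…,φ_N: ∂|0,1,…,N−1|/∂s = −ε |−1,1,2,…,N−1| + (Σ_{i=1}^N μ_{ii}(s)) |0,1,…,N−1|, for all n, x, s. -/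
/-!
Jacobi's formula differentiates the Casorati determinant row by row. Each row of the derivative
is `-ε` times the row shifted by `-1` plus the `μ`-combination of all rows; the combination
contributes `μ_ii · τ` for row `i`, by multilinearity and alternation. The shifted part, a sum of
determinants with one row replaced, equals the sum of determinants with one column replaced
(both are `trace (adj C * S)`). Column `j ≥ 1` of the shifted matrix is column `j - 1` of the
Casorati matrix, so only the replacement of column `0` survives, and that is `|-1, 1, …, N-1|`.
-/

open Matrix Finset

namespace Matrix

variable {n : Type*} [Fintype n] [DecidableEq n]

section Deriv

variable {𝕜 : Type*} [NontriviallyNormedField 𝕜]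

def detRowContinuousMultilinear : ContinuousMultilinearMap 𝕜 (fun _ : n => n → 𝕜) 𝕜 :=
  ⟨(detRowAlternating : (n → 𝕜) [⋀^n]→ₗ[𝕜] 𝕜).toMultilinearMap, continuous_id.matrix_det⟩

theorem hasDerivAt_det_s3 {M : 𝕜 → Matrix n n 𝕜} {M' : Matrix n n 𝕜} {s : 𝕜}
    (h : ∀ i j, HasDerivAt (fun t => M t i j) (M' i j) s) :
    HasDerivAt (fun t => (M t).det) (∑ i, ((M s).updateRow i (M' i)).det) s := by
  have hM : HasDerivAt M M' s := hasDerivAt_pi.2 fun i => hasDerivAt_pi.2 (h i)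
  refine ((detRowContinuousMultilinear.hasFDerivAt (M s)).comp_hasDerivAt s hM).congr_deriv ?_
  exact ContinuousMultilinearMap.linearDeriv_apply _ _ _

end Deriv

variable {R : Type*} [CommRing R]

theorem sum_det_updateRow_eq_sum_det_updateCol (A B : Matrix n n R) :
    ∑ i, (A.updateRow i (B i)).det = ∑ j, (A.updateCol j fun i => B i j).det := by
  simp only [← cramer_transpose_apply, ← cramer_apply, cramer_eq_adjugate_mulVec,
    ← adjugate_transpose, mulVec, dotProduct, transpose_apply]
  exact Finset.sum_comm

theorem sum_det_updateRow_mul (A μ : Matrix n n R) :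
    ∑ i, (A.updateRow i ((μ * A) i)).det = μ.trace * A.det := by
  have hrow : ∀ i, (μ * A) i = ∑ k, μ i k • A k := fun i => by
    ext j; simp [mul_apply]
  simp [hrow, det_updateRow_sum, trace, Finset.sum_mul]

theorem sum_det_updateRow_smul_add_mul (A S μ : Matrix n n R) (c : R) :
    ∑ i, (A.updateRow i ((c • S + μ * A) i)).det =
      c * ∑ i, (A.updateRow i (S i)).det + μ.trace * A.det := by
  have hrow : ∀ i, (c • S + μ * A) i = c • S i + (μ * A) i := fun _ => rfl
  simp only [hrow, det_updateRow_add, det_updateRow_smul, sum_add_distrib,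
    ← mul_sum, sum_det_updateRow_mul]

theorem sum_det_updateCol_eq_det_updateCol_zero_of_shift {m : ℕ}
    (A B : Matrix (Fin (m + 1)) (Fin (m + 1)) R)
    (hB : ∀ i (j : Fin m), B i j.succ = A i j.castSucc) :
    ∑ j, (A.updateCol j fun i => B i j).det = (A.updateCol 0 fun i => B i 0).det := by
  rw [Fin.sum_univ_succ, add_eq_left]
  refine Finset.sum_eq_zero fun j _ => ?_
  have hne : j.castSucc ≠ j.succ := Fin.castSucc_lt_succ.ne
  exact det_zero_of_column_eq hne fun i => by simp [updateCol_ne hne, hB]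

end Matrix

/-- The generalized Casorati determinant `|i_1,…,i_N|`: the determinant of the `N×N` matrix
whose `(i,j)` entry is `φ_i(n + i_j, x, s)`, where the column shifts are given by `idx`. -/
def gcas {N : ℕ} (φ : Fin N → ℤ → ℝ → ℝ → ℝ) (idx : Fin N → ℤ) (n : ℤ) (x s : ℝ) : ℝ :=
  Matrix.det (Matrix.of fun i j : Fin N => φ i (n + idx j) x s)

theorem deriv_s_casoratian_general
    (N : ℕ) (hN : 1 ≤ N) (ε : ℝ)
    (φ : Fin N → ℤ → ℝ → ℝ → ℝ) (mu : Fin N → Fin N → ℝ → ℝ)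
    (hdiff : ∀ i n (x : ℝ), Differentiable ℝ (fun s => φ i n x s))
    (hs : ∀ i n (x s : ℝ), deriv (fun s' => φ i n x s') s =
        -ε * φ i (n - 1) x s + ∑ j, mu i j s * φ j n x s) :
    ∀ (n : ℤ) (x s : ℝ),
      deriv (fun s' => gcas φ (fun j => (j.1 : ℤ)) n x s') s =
        -ε * gcas φ (fun j => if j.1 = 0 then (-1 : ℤ) else (j.1 : ℤ)) n x s +
          (∑ i, mu i i s) * gcas φ (fun j => (j.1 : ℤ)) n x s := by
  intro n x s
  obtain ⟨m, rfl⟩ : ∃ m, N = m + 1 := ⟨N - 1, by omega⟩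
  set C : ℝ → Matrix (Fin (m + 1)) (Fin (m + 1)) ℝ := fun t => of fun i j => φ i (n + j) x t
  set S : Matrix (Fin (m + 1)) (Fin (m + 1)) ℝ := of fun i j => φ i (n + j - 1) x s
  set μ : Matrix (Fin (m + 1)) (Fin (m + 1)) ℝ := of fun i j => mu i j s
  have hC : ∀ i j, HasDerivAt (fun t => C t i j) (((-ε) • S + μ * C s) i j) s := fun i j => by
    simpa [hs, S, μ, C, mul_apply] using (hdiff i (n + j) x s).hasDerivAt
  have hshift : ∀ i (j : Fin m), S i j.succ = C s i j.castSucc := fun i j => by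
    simp [S, C, add_sub_assoc]
  have hcol0 : ((C s).updateCol 0 fun i => S i 0) = of fun i j =>
      φ i (n + if j.1 = 0 then (-1 : ℤ) else (j.1 : ℤ)) x s := by
    ext i j
    cases j using Fin.cases <;> simp [S, C, Fin.succ_ne_zero, sub_eq_add_neg]
  rw [show (fun s' => gcas φ (fun j => (j.1 : ℤ)) n x s') = fun t => (C t).det from rfl,
    (hasDerivAt_det_s3 hC).deriv, sum_det_updateRow_smul_add_mul,
    sum_det_updateRow_eq_sum_det_updateCol,
    sum_det_updateCol_eq_det_updateCol_zero_of_shift _ _ hshift, hcol0]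
  rfl

/-- `∂|0,…,N−1|/∂s = −ε |−1,1,…,N−1| + (Σ_i μ_{ii}(s)) |0,…,N−1|`. -/
theorem deriv_s_casoratian
    (N : ℕ) (hN : 1 ≤ N) (ε : ℝ) (hε : ε = 1 ∨ ε = -1)
    (φ : Fin N → ℤ → ℝ → ℝ → ℝ) (mu : Fin N → Fin N → ℝ → ℝ)
    (hdiff : ∀ i n (x : ℝ), Differentiable ℝ (fun s => φ i n x s))
    (hs : ∀ i n (x s : ℝ), deriv (fun s' => φ i n x s') s =
        -ε * φ i (n - 1) x s + ∑ j, mu i j s * φ j n x s) :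
    ∀ (n : ℤ) (x s : ℝ),
      deriv (fun s' => gcas φ (fun j => (j.1 : ℤ)) n x s') s =
        -ε * gcas φ (fun j => if j.1 = 0 then (-1 : ℤ) else (j.1 : ℤ)) n x s +
          (∑ i, mu i i s) * gcas φ (fun j => (j.1 : ℤ)) n x s :=
  deriv_s_casoratian_general N hN ε φ mu hdiff hs
end

section
/- Let ε ∈ {1, −1}, δ ∈ {1, −1}, N ≥ 1. Suppose Φ : ℤ × ℝ × ℝ → ℝ^N is twice continuously differentiable in (x,s), A : ℝ → Matrix(N,N,ℝ) and B : ℝ → Matrix(N,N,ℝ) are functions, and for all n ∈ ℤ, x, s ∈ ℝ: ∂Φ(n,x,s)/∂x = ε Φ(n+δ,x,s) + A(x) Φ(n,x,s) and ∂Φ(n,x,s)/∂s = −ε Φ(n−δ,x,s) + B(s) Φ(n,x,s). If at a point (x₀, s₀) the matrices do not commute, i.e. A(x₀) B(s₀) ≠ B(s₀) A(x₀), then the Casorati determinant vanishes there: for every n ∈ ℤ, det( (Φ_i(n+j−1, x₀, s₀))_{1≤i,j≤N} ) = 0, where Φ_i denotes the i-th component of Φ. -/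
/-!
Differentiating the `x`-equation in `s` and the `s`-equation in `x` and equating the mixed
partials (Schwarz), the shift terms `±ε Φ(n ± δ)` and `-ε² Φ(n)` cancel and leave
`(A(x) B(s) - B(s) A(x)) Φ(n, x, s) = 0` for every `n`. Thus every column of the Casorati matrix
lies in the kernel of the nonzero commutator, so the matrix is singular.
-/

open Function Matrix

section MixedPartials

variable {E : Type*} [NormedAddCommGroup E] [NormedSpace ℝ E] {f : ℝ → ℝ → E}

theorem hasDerivAt_slice_left {x s : ℝ} {f' : ℝ × ℝ →L[ℝ] E}
    (hf : HasFDerivAt (uncurry f) f' (x, s)) :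
    HasDerivAt (fun x' => f x' s) (f' (1, 0)) x :=
  hf.comp_hasDerivAt (f := fun x' : ℝ => (x', s)) x
    ((hasDerivAt_id x).prodMk (hasDerivAt_const x s))

theorem hasDerivAt_slice_right {x s : ℝ} {f' : ℝ × ℝ →L[ℝ] E}
    (hf : HasFDerivAt (uncurry f) f' (x, s)) :
    HasDerivAt (fun s' => f x s') (f' (0, 1)) s :=
  hf.comp_hasDerivAt (f := fun s' : ℝ => (x, s')) s
    ((hasDerivAt_const s x).prodMk (hasDerivAt_id s))

theorem deriv_deriv_comm (hf : ContDiff ℝ 2 (uncurry f)) (x s : ℝ) :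
    deriv (fun s' => deriv (fun x' => f x' s') x) s =
      deriv (fun x' => deriv (fun s' => f x' s') s) x := by
  have hf₁ : Differentiable ℝ (uncurry f) := hf.differentiable two_ne_zero
  have hf₂ : Differentiable ℝ (fderiv ℝ (uncurry f)) :=
    (hf.fderiv_right (m := 1) le_rfl).differentiable one_ne_zero
  have hleft : (fun s' => deriv (fun x' => f x' s') x) =
      fun s' => fderiv ℝ (uncurry f) (x, s') (1, 0) :=
    funext fun s' => (hasDerivAt_slice_left (hf₁ _).hasFDerivAt).deriv
  have hright : (fun x' => deriv (fun s' => f x' s') s) =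
      fun x' => fderiv ℝ (uncurry f) (x', s) (0, 1) :=
    funext fun x' => (hasDerivAt_slice_right (hf₁ _).hasFDerivAt).deriv
  rw [hleft, hright]
  have hslice (v : ℝ × ℝ) : HasFDerivAt (uncurry fun x' s' => fderiv ℝ (uncurry f) (x', s') v)
      ((ContinuousLinearMap.apply ℝ E v).comp (fderiv ℝ (fderiv ℝ (uncurry f)) (x, s))) (x, s) :=
    (ContinuousLinearMap.apply ℝ E v).hasFDerivAt.comp (x, s) (hf₂ (x, s)).hasFDerivAt
  rw [(hasDerivAt_slice_right (hslice (1, 0))).deriv,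
    (hasDerivAt_slice_left (hslice (0, 1))).deriv]
  exact hf.contDiffAt.isSymmSndFDerivAt (by simp) _ _

end MixedPartials

theorem HasDerivAt.const_mulVec {ι : Type*} [Fintype ι] (M : Matrix ι ι ℝ) {f : ℝ → ι → ℝ}
    {f' : ι → ℝ} {t : ℝ} (hf : HasDerivAt f f' t) :
    HasDerivAt (fun t' => M *ᵥ f t') (M *ᵥ f') t :=
  M.mulVecLin.toContinuousLinearMap.hasFDerivAt.comp_hasDerivAt t hf

theorem Matrix.det_eq_zero_of_mul_eq_zero {ι K : Type*} [Fintype ι] [DecidableEq ι] [Field K]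
    {C M : Matrix ι ι K} (hC : C ≠ 0) (hCM : C * M = 0) : M.det = 0 := by
  by_contra hM
  exact hC (((isUnit_iff_isUnit_det M).mpr (isUnit_iff_ne_zero.mpr hM)).mul_left_eq_zero.mp hCM)

section DifferentialDifferenceSystem

variable {ι : Type*} [Fintype ι] {ε : ℝ} {δ : ℤ} {Φ : ℤ → ℝ → ℝ → ι → ℝ}
  {A B : ℝ → Matrix ι ι ℝ}

theorem commutator_mulVec_eq_zero (hreg : ∀ n, ContDiff ℝ 2 (uncurry (Φ n)))
    (hx : ∀ n x s, deriv (fun x' => Φ n x' s) x = ε • Φ (n + δ) x s + A x *ᵥ Φ n x s)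
    (hs : ∀ n x s, deriv (fun s' => Φ n x s') s = (-ε) • Φ (n - δ) x s + B s *ᵥ Φ n x s)
    (n : ℤ) (x s : ℝ) : (A x * B s - B s * A x) *ᵥ Φ n x s = 0 := by
  have hdiff (m : ℤ) (x s : ℝ) : HasFDerivAt (uncurry (Φ m)) _ (x, s) :=
    ((hreg m).differentiable two_ne_zero (x, s)).hasFDerivAt
  have hx' (m : ℤ) : HasDerivAt (fun x' => Φ m x' s) (ε • Φ (m + δ) x s + A x *ᵥ Φ m x s) x :=
    hx m x s ▸ (hasDerivAt_slice_left (hdiff m x s)).differentiableAt.hasDerivAt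
  have hs' (m : ℤ) : HasDerivAt (fun s' => Φ m x s') ((-ε) • Φ (m - δ) x s + B s *ᵥ Φ m x s) s :=
    hs m x s ▸ (hasDerivAt_slice_right (hdiff m x s)).differentiableAt.hasDerivAt
  have hxs : deriv (fun s' => deriv (fun x' => Φ n x' s') x) s =
      ε • ((-ε) • Φ (n + δ - δ) x s + B s *ᵥ Φ (n + δ) x s) +
        A x *ᵥ ((-ε) • Φ (n - δ) x s + B s *ᵥ Φ n x s) := by
    simp only [hx]
    exact (((hs' (n + δ)).const_smul ε).add ((hs' n).const_mulVec (A x))).deriv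
  have hsx : deriv (fun x' => deriv (fun s' => Φ n x' s') s) x =
      (-ε) • (ε • Φ (n - δ + δ) x s + A x *ᵥ Φ (n - δ) x s) +
        B s *ᵥ (ε • Φ (n + δ) x s + A x *ᵥ Φ n x s) := by
    simp only [hs]
    exact (((hx' (n - δ)).const_smul (-ε)).add ((hx' n).const_mulVec (B s))).deriv
  have hcomm := deriv_deriv_comm (hreg n) x s
  rw [hxs, hsx, sub_add_cancel, add_sub_cancel_right] at hcomm
  simp only [mulVec_add, mulVec_smul, sub_mulVec, ← mulVec_mulVec] at hcomm ⊢
  linear_combination (norm := module) hcomm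

end DifferentialDifferenceSystem

theorem casoratian_eq_zero_of_not_commute_general
    (N : ℕ) (ε : ℝ) (δ : ℤ)
    (Φ : ℤ → ℝ → ℝ → (Fin N → ℝ))
    (A B : ℝ → Matrix (Fin N) (Fin N) ℝ)
    (hreg : ∀ n, ContDiff ℝ 2 (fun p : ℝ × ℝ => Φ n p.1 p.2))
    (hx : ∀ n (x s : ℝ), deriv (fun x' => Φ n x' s) x =
        ε • Φ (n + δ) x s + (A x).mulVec (Φ n x s))
    (hs : ∀ n (x s : ℝ), deriv (fun s' => Φ n x s') s =
        (-ε) • Φ (n - δ) x s + (B s).mulVec (Φ n x s))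
    (x₀ s₀ : ℝ) (hnc : A x₀ * B s₀ ≠ B s₀ * A x₀) :
    ∀ n : ℤ, Matrix.det (Matrix.of fun i j : Fin N => Φ (n + (j.1 : ℤ)) x₀ s₀ i) = 0 := by
  intro n
  refine det_eq_zero_of_mul_eq_zero (sub_ne_zero.mpr hnc) ?_
  ext i j
  exact congrFun (commutator_mulVec_eq_zero hreg hx hs (n + j) x₀ s₀) i

/-- if the coefficient matrices of the coupled linear differential-difference
system do not commute at a point `(x₀, s₀)`, then the Casorati determinant vanishes there. -/
theorem casoratian_eq_zero_of_not_commute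
    (N : ℕ) (hN : 1 ≤ N) (ε : ℝ) (hε : ε = 1 ∨ ε = -1) (δ : ℤ) (hδ : δ = 1 ∨ δ = -1)
    (Φ : ℤ → ℝ → ℝ → (Fin N → ℝ))
    (A B : ℝ → Matrix (Fin N) (Fin N) ℝ)
    (hreg : ∀ n, ContDiff ℝ 2 (fun p : ℝ × ℝ => Φ n p.1 p.2))
    (hx : ∀ n (x s : ℝ), deriv (fun x' => Φ n x' s) x =
        ε • Φ (n + δ) x s + (A x).mulVec (Φ n x s))
    (hs : ∀ n (x s : ℝ), deriv (fun s' => Φ n x s') s =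
        (-ε) • Φ (n - δ) x s + (B s).mulVec (Φ n x s))
    (x₀ s₀ : ℝ) (hnc : A x₀ * B s₀ ≠ B s₀ * A x₀) :
    ∀ n : ℤ, Matrix.det (Matrix.of fun i j : Fin N => Φ (n + (j.1 : ℤ)) x₀ s₀ i) = 0 :=
  casoratian_eq_zero_of_not_commute_general N ε δ Φ A B hreg hx hs x₀ s₀ hnc
end
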